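/- Let p ≥ 1 and let F : [−π, π] → ℂ^p and G, L : [−π, π] → ℂ be measurable, with L(ω)·G(ω) = 1 for almost every ω. Assume ω ↦ |F(ω)|₂²·|L(ω)|², ω ↦ |G(ω)|², and ω ↦ |F(ω)|₂ are integrable. Then ((1/2π) ∫_{−π}^{π} |F(ω)|₂² |L(ω)|² dω) · ((1/2π) ∫_{−π}^{π} |G(ω)|² dω) ≥ ((1/2π) ∫_{−π}^{π} |F(ω)|₂ dω)². (Lower bound on the mean squared error of any zero-forcing-equalization mechanism for a SIMO filter F with pre-filter G of left inverse L.) -/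

import Mathlib

open MeasureTheory Real

noncomputable instance (ι : Type*) : MeasurableSpace (EuclideanSpace ℂ ι) :=
  MeasurableSpace.comap (WithLp.ofLp (p := 2)) MeasurableSpace.pi

/-! Since `L G = 1` a.e., `‖F‖ = (‖F‖ ‖L‖) · ‖G‖` a.e., and the bound is the Cauchy–Schwarz
inequality for the functions `‖F‖ ‖L‖` and `‖G‖`. -/

section CauchySchwarz

variable {α : Type*} [MeasurableSpace α] {μ : Measure α}

/-- `|f| = √(f ^ 2)` inherits measurability from `f ^ 2`. -/
theorem memLp_two_abs_of_integrable_sq {f : α → ℝ} (hf : Integrable (fun a => f a ^ 2) μ) :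
    MemLp (fun a => |f a|) 2 μ := by
  have hmeas : AEStronglyMeasurable (fun a => |f a|) μ := by
    simpa only [Real.sqrt_sq_eq_abs] using
      Real.continuous_sqrt.comp_aestronglyMeasurable hf.aestronglyMeasurable
  rw [memLp_two_iff_integrable_sq hmeas]
  simpa only [sq_abs] using hf

theorem sq_integral_mul_le_integral_sq_mul_integral_sq {f g : α → ℝ}
    (hf : Integrable (fun a => f a ^ 2) μ) (hg : Integrable (fun a => g a ^ 2) μ) :
    (∫ a, f a * g a ∂μ) ^ 2 ≤ (∫ a, f a ^ 2 ∂μ) * ∫ a, g a ^ 2 ∂μ := by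
  have holder := integral_mul_norm_le_Lp_mul_Lq Real.HolderConjugate.two_two
    (by simpa using memLp_two_abs_of_integrable_sq hf)
    (by simpa using memLp_two_abs_of_integrable_sq hg)
  simp only [Real.norm_eq_abs, abs_abs, Real.rpow_two, sq_abs, ← Real.sqrt_eq_rpow] at holder
  calc (∫ a, f a * g a ∂μ) ^ 2 ≤ (∫ a, |f a| * |g a| ∂μ) ^ 2 := by
        rw [← sq_abs]
        gcongr
        simpa only [abs_mul] using abs_integral_le_integral_abs (f := fun a => f a * g a)
    _ ≤ (√(∫ a, f a ^ 2 ∂μ) * √(∫ a, g a ^ 2 ∂μ)) ^ 2 := by gcongr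
    _ = (∫ a, f a ^ 2 ∂μ) * ∫ a, g a ^ 2 ∂μ := by
        rw [mul_pow, Real.sq_sqrt (integral_nonneg fun a => sq_nonneg _),
          Real.sq_sqrt (integral_nonneg fun a => sq_nonneg _)]

end CauchySchwarz

theorem zfe_simo_lower_bound_general (p : ℕ)
    (F : ℝ → EuclideanSpace ℂ (Fin p)) (G L : ℝ → ℂ)
    (hinv : ∀ᵐ ω ∂(volume.restrict (Set.Icc (-π) π)), L ω * G ω = 1)
    (hFL : IntegrableOn (fun ω => ‖F ω‖ ^ 2 * ‖L ω‖ ^ 2) (Set.Icc (-π) π))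
    (hG2 : IntegrableOn (fun ω => ‖G ω‖ ^ 2) (Set.Icc (-π) π)) :
    ((1 / (2 * π)) * ∫ ω in Set.Icc (-π) π, ‖F ω‖ ^ 2 * ‖L ω‖ ^ 2) *
        ((1 / (2 * π)) * ∫ ω in Set.Icc (-π) π, ‖G ω‖ ^ 2) ≥
      ((1 / (2 * π)) * ∫ ω in Set.Icc (-π) π, ‖F ω‖) ^ 2 := by
  have hF_factor : ∫ ω in Set.Icc (-π) π, ‖F ω‖ =
      ∫ ω in Set.Icc (-π) π, (‖F ω‖ * ‖L ω‖) * ‖G ω‖ := by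
    refine integral_congr_ae ?_
    filter_upwards [hinv] with ω hω
    rw [mul_assoc, ← norm_mul, hω, norm_one, mul_one]
  have cauchy_schwarz := sq_integral_mul_le_integral_sq_mul_integral_sq
    (f := fun ω => ‖F ω‖ * ‖L ω‖) (g := fun ω => ‖G ω‖) (by simpa only [mul_pow, IntegrableOn] using hFL) hG2
  simp only [mul_pow] at cauchy_schwarz
  rw [ge_iff_le, hF_factor, mul_pow]
  calc (1 / (2 * π)) ^ 2 * (∫ ω in Set.Icc (-π) π, ‖F ω‖ * ‖L ω‖ * ‖G ω‖) ^ 2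
      ≤ (1 / (2 * π)) ^ 2 * ((∫ ω in Set.Icc (-π) π, ‖F ω‖ ^ 2 * ‖L ω‖ ^ 2) *
          ∫ ω in Set.Icc (-π) π, ‖G ω‖ ^ 2) := by gcongr
    _ = _ := by ring

theorem zfe_simo_lower_bound (p : ℕ) (hp : 1 ≤ p)
    (F : ℝ → EuclideanSpace ℂ (Fin p)) (G L : ℝ → ℂ)
    (hF : Measurable F) (hG : Measurable G) (hL : Measurable L)
    (hinv : ∀ᵐ ω ∂(volume.restrict (Set.Icc (-π) π)), L ω * G ω = 1)
    (hFL : IntegrableOn (fun ω => ‖F ω‖ ^ 2 * ‖L ω‖ ^ 2) (Set.Icc (-π) π))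
    (hG2 : IntegrableOn (fun ω => ‖G ω‖ ^ 2) (Set.Icc (-π) π))
    (hFn : IntegrableOn (fun ω => ‖F ω‖) (Set.Icc (-π) π)) :
    ((1 / (2 * π)) * ∫ ω in Set.Icc (-π) π, ‖F ω‖ ^ 2 * ‖L ω‖ ^ 2) *
        ((1 / (2 * π)) * ∫ ω in Set.Icc (-π) π, ‖G ω‖ ^ 2) ≥
      ((1 / (2 * π)) * ∫ ω in Set.Icc (-π) π, ‖F ω‖) ^ 2 :=
  zfe_simo_lower_bound_general p F G L hinv hFL hG2
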